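/- arXiv:1805.07255 — 8 statements merged into one kernel-verified Lean document; each statement's English description precedes it below -/
import Mathlib

section
/- Monotone one-step bound for the interior update: for all real numbers a, b, c one has |b − λ·(F(b,c) − F(a,b))| ≤ max(|a|, |b|, |c|). -/
/-!
Write the update as `H(a, b, c) = g b + λ F₁ a − λ F₂ c` with `g w = w − λ (F₁ w − F₂ w)`.
The sign conditions make `H` nondecreasing in `a` and `c`, and the CFL condition gives `g' ≥ 0`,
so `H` is nondecreasing in `b`. Since `H(w, w, w) = w`, monotonicity traps `H(a, b, c)` between
`min(a, b, c)` and `max(a, b, c)`.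
-/

theorem Monotone.apply_mem_Icc_min_max {α : Type*} [LinearOrder α] {f : α × α × α → α}
    (hf : Monotone f) (hdiag : ∀ w, f (w, w, w) = w) (a b c : α) :
    f (a, b, c) ∈ Set.Icc (min a (min b c)) (max a (max b c)) := by
  constructor
  · calc min a (min b c)
        = f (min a (min b c), min a (min b c), min a (min b c)) := (hdiag _).symm
      _ ≤ f (a, b, c) :=
        hf ⟨min_le_left _ _, (min_le_right _ _).trans (min_le_left _ _),
          (min_le_right _ _).trans (min_le_right _ _)⟩
  · calc f (a, b, c)
        ≤ f (max a (max b c), max a (max b c), max a (max b c)) :=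
          hf ⟨le_max_left _ _, (le_max_left _ _).trans (le_max_right _ _),
            (le_max_right _ _).trans (le_max_right _ _)⟩
      _ = max a (max b c) := hdiag _

theorem Monotone.abs_apply_le_max_abs {G : Type*} [AddCommGroup G] [LinearOrder G]
    [IsOrderedAddMonoid G] {f : G × G × G → G} (hf : Monotone f) (hdiag : ∀ w, f (w, w, w) = w)
    (a b c : G) : |f (a, b, c)| ≤ max |a| (max |b| |c|) := by
  obtain ⟨hmin, hmax⟩ := hf.apply_mem_Icc_min_max hdiag a b c
  rw [abs_le]
  constructor
  · calc -max |a| (max |b| |c|) = min (-|a|) (min (-|b|) (-|c|)) := by rw [neg_sup, neg_sup]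
      _ ≤ min a (min b c) := min_le_min (neg_abs_le a) (min_le_min (neg_abs_le b) (neg_abs_le c))
      _ ≤ f (a, b, c) := hmin
  · calc f (a, b, c) ≤ max a (max b c) := hmax
      _ ≤ max |a| (max |b| |c|) :=
        max_le_max (le_abs_self a) (max_le_max (le_abs_self b) (le_abs_self c))

theorem monotone_sub_mul_of_mul_deriv_le_one {f : ℝ → ℝ} {lam : ℝ} (hf : Differentiable ℝ f)
    (h : ∀ w, lam * deriv f w ≤ 1) : Monotone fun w => w - lam * f w := by
  refine monotone_of_deriv_nonneg (differentiable_id.sub (hf.const_mul lam)) fun w => ?_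
  have hderiv : HasDerivAt (fun w => w - lam * f w) (1 - lam * deriv f w) w :=
    (hasDerivAt_id w).sub ((hf w).hasDerivAt.const_mul lam)
  rw [hderiv.deriv]
  linarith [h w]

def splitFluxUpdate (lam : ℝ) (F₁ F₂ : ℝ → ℝ) (p : ℝ × ℝ × ℝ) : ℝ :=
  p.2.1 - lam * ((F₁ p.2.1 + F₂ p.2.2) - (F₁ p.1 + F₂ p.2.1))

theorem splitFluxUpdate_diag (lam : ℝ) (F₁ F₂ : ℝ → ℝ) (w : ℝ) :
    splitFluxUpdate lam F₁ F₂ (w, w, w) = w := by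
  simp [splitFluxUpdate]

theorem monotone_splitFluxUpdate {lam : ℝ} {F₁ F₂ : ℝ → ℝ} (hlam : 0 ≤ lam)
    (h₁ : Monotone F₁) (h₂ : Antitone F₂) (hg : Monotone fun w => w - lam * (F₁ w - F₂ w)) :
    Monotone (splitFluxUpdate lam F₁ F₂) := by
  rintro ⟨a, b, c⟩ ⟨a', b', c'⟩ ⟨ha, hb, hc⟩
  have hgb : b - lam * (F₁ b - F₂ b) ≤ b' - lam * (F₁ b' - F₂ b') := hg hb
  have hFa : lam * F₁ a ≤ lam * F₁ a' := mul_le_mul_of_nonneg_left (h₁ ha) hlam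
  have hFc : lam * F₂ c' ≤ lam * F₂ c := mul_le_mul_of_nonneg_left (h₂ hc) hlam
  simp only [splitFluxUpdate]
  linarith

/-- Monotone one-step bound for the interior update of the scheme:
given a split numerical flux `F(u,v) = F₁(u) + F₂(v)` with `F₁, F₂ ∈ C¹`,
`F₁' ≥ 0`, `F₂' ≤ 0` and the CFL condition `λ (F₁' - F₂') ≤ 1`, one has
`|b - λ (F(b,c) - F(a,b))| ≤ max (|a|, |b|, |c|)`. -/
theorem stmt_0 (lam : ℝ) (hlam : 0 < lam) (F₁ F₂ : ℝ → ℝ)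
    (hF₁ : ContDiff ℝ 1 F₁) (hF₂ : ContDiff ℝ 1 F₂)
    (hmono₁ : ∀ w, 0 ≤ deriv F₁ w) (hmono₂ : ∀ w, deriv F₂ w ≤ 0)
    (hCFL : ∀ w, lam * (deriv F₁ w - deriv F₂ w) ≤ 1)
    (a b c : ℝ) :
    |b - lam * ((F₁ b + F₂ c) - (F₁ a + F₂ b))| ≤ max |a| (max |b| |c|) := by
  have hd₁ : Differentiable ℝ F₁ := hF₁.differentiable one_ne_zero
  have hd₂ : Differentiable ℝ F₂ := hF₂.differentiable one_ne_zero
  have hg : Monotone fun w => w - lam * (F₁ w - F₂ w) :=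
    monotone_sub_mul_of_mul_deriv_le_one (hd₁.sub hd₂) fun w => by
      rw [deriv_fun_sub (hd₁ w) (hd₂ w)]
      exact hCFL w
  have hmono : Monotone (splitFluxUpdate lam F₁ F₂) :=
    monotone_splitFluxUpdate hlam.le (monotone_of_deriv_nonneg hd₁ hmono₁)
      (antitone_of_deriv_nonpos hd₂ hmono₂) hg
  exact hmono.abs_apply_le_max_abs (splitFluxUpdate_diag lam F₁ F₂) a b c
end

section
/- One-step total variation estimate: for every n = 0,…,M, the solution of the scheme satisfies |u^{n+1}|_{BV} ≤ |uⁿ|_{BV} + |u₀^{n+1} − u₀ⁿ| + |u_N^{n+1} − u_Nⁿ| + 3·γ·Δt·‖uⁿ‖_∞. -/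
/-!
Writing `F₁(b) - F₁(a)` and `F₂(b) - F₂(a)` as slopes times `b - a`, the scheme takes Harten's
incremental form `u_j^{n+1} = u_j - C_{j-1} Δ_{j-1} + E_j Δ_j + s_j`, where `Δ_j = u_{j+1} - u_j`,
`C = λ·slope F₁ ≥ 0`, `E = -λ·slope F₂ ≥ 0`, and `C + E ≤ 1` because the CFL condition makes
`λ(F₁ - F₂) - id` antitone. Each new jump is then a combination of old jumps with nonnegative
weights, which telescope when summed over the cells; what is left are the two boundary updates
and the source increments. The source `γΔt P` is bounded by `γΔt ‖uⁿ‖_∞` at the two cells next to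
the boundary, and its increments by `γΔt Δx ‖uⁿ‖_∞`, which add up to at most `γΔt ‖uⁿ‖_∞` over
the `N - 2` interior cells.
-/

open Finset

lemma abs_weighted_add_le {α β γ : ℝ} (hα : 0 ≤ α) (hβ : 0 ≤ β) (hγ : 0 ≤ γ) (x y z t : ℝ) :
    |α * x + β * y + γ * z + t| ≤ α * |x| + β * |y| + γ * |z| + |t| := by
  have h₁ := abs_add_le (α * x + β * y + γ * z) t
  have h₂ := abs_add_three (α * x) (β * y) (γ * z)
  simp only [abs_mul, abs_of_nonneg hα, abs_of_nonneg hβ, abs_of_nonneg hγ] at h₂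
  linarith

lemma abs_add_div_two_le {a b K : ℝ} (ha : |a| ≤ K) (hb : |b| ≤ K) : |(a + b) / 2| ≤ K := by
  rw [abs_div, abs_two, div_le_iff₀ two_pos]
  linarith [abs_add_le a b]

section Harten

variable {v w C E s : ℕ → ℝ} {N : ℕ}

lemma abs_sub_le_of_incremental_left (hE : ∀ j, 0 ≤ E j) (hCE : ∀ j, C j + E j ≤ 1)
    (hw : w 1 = v 1 - C 0 * (v 1 - v 0) + E 1 * (v 2 - v 1) + s 1) :
    |w 1 - w 0| ≤ (1 - C 0) * |v 1 - v 0| + E 1 * |v 2 - v 1| + |w 0 - v 0| + |s 1| := by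
  have hid : w 1 - w 0 = (1 - C 0) * (v 1 - v 0) + E 1 * (v 2 - v 1) + 1 * (v 0 - w 0) + s 1 := by
    linear_combination hw
  rw [hid, ← one_mul |w 0 - v 0|, abs_sub_comm (w 0)]
  exact abs_weighted_add_le (by linarith [hCE 0, hE 0]) (hE 1) zero_le_one _ _ _ _

lemma abs_sub_le_of_incremental_right (hC : ∀ j, 0 ≤ C j) (hCE : ∀ j, C j + E j ≤ 1)
    (hw : w (N + 1) = v (N + 1) - C N * (v (N + 1) - v N) + E (N + 1) * (v (N + 2) - v (N + 1))
      + s (N + 1)) :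
    |w (N + 2) - w (N + 1)| ≤ (1 - E (N + 1)) * |v (N + 2) - v (N + 1)|
      + C N * |v (N + 1) - v N| + |w (N + 2) - v (N + 2)| + |s (N + 1)| := by
  have hid : w (N + 2) - w (N + 1) = (1 - E (N + 1)) * (v (N + 2) - v (N + 1))
      + C N * (v (N + 1) - v N) + 1 * (w (N + 2) - v (N + 2)) + -s (N + 1) := by
    linear_combination -hw
  rw [hid, ← one_mul |w (N + 2) - v (N + 2)|, ← abs_neg (s (N + 1))]
  exact abs_weighted_add_le (by linarith [hC (N + 1), hCE (N + 1)]) (hC N) zero_le_one _ _ _ _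

/-- Written so that the weights of the old jumps telescope when summed over `i`. -/
lemma abs_sub_le_of_incremental_interior (hC : ∀ j, 0 ≤ C j) (hE : ∀ j, 0 ≤ E j)
    (hCE : ∀ j, C j + E j ≤ 1) (i : ℕ)
    (hw₁ : w (i + 1) = v (i + 1) - C i * (v (i + 1) - v i) + E (i + 1) * (v (i + 2) - v (i + 1))
      + s (i + 1))
    (hw₂ : w (i + 2) = v (i + 2) - C (i + 1) * (v (i + 2) - v (i + 1))
      + E (i + 2) * (v (i + 3) - v (i + 2)) + s (i + 2)) :
    |w (i + 2) - w (i + 1)| ≤ |v (i + 2) - v (i + 1)|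
      + (C i * |v (i + 1) - v i| - C (i + 1) * |v (i + 2) - v (i + 1)|)
      + (E (i + 2) * |v (i + 3) - v (i + 2)| - E (i + 1) * |v (i + 2) - v (i + 1)|)
      + |s (i + 2) - s (i + 1)| := by
  have hid : w (i + 2) - w (i + 1) = (1 - C (i + 1) - E (i + 1)) * (v (i + 2) - v (i + 1))
      + C i * (v (i + 1) - v i) + E (i + 2) * (v (i + 3) - v (i + 2))
      + (s (i + 2) - s (i + 1)) := by
    linear_combination hw₂ - hw₁
  rw [hid]
  have := abs_weighted_add_le (α := 1 - C (i + 1) - E (i + 1)) (by linarith [hCE (i + 1)])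
    (hC i) (hE (i + 2))
    (v (i + 2) - v (i + 1)) (v (i + 1) - v i) (v (i + 3) - v (i + 2)) (s (i + 2) - s (i + 1))
  linarith

/-- Harten's lemma, with source terms and free boundary values. -/
theorem sum_abs_sub_le_of_incremental (hC : ∀ j, 0 ≤ C j) (hE : ∀ j, 0 ≤ E j)
    (hCE : ∀ j, C j + E j ≤ 1)
    (hw : ∀ j ≤ N, w (j + 1) = v (j + 1) - C j * (v (j + 1) - v j)
      + E (j + 1) * (v (j + 2) - v (j + 1)) + s (j + 1)) :
    ∑ j ∈ range (N + 2), |w (j + 1) - w j|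
      ≤ ∑ j ∈ range (N + 2), |v (j + 1) - v j| + |w 0 - v 0| + |w (N + 2) - v (N + 2)|
        + |s 1| + |s (N + 1)| + ∑ i ∈ range N, |s (i + 2) - s (i + 1)| := by
  have hleft := abs_sub_le_of_incremental_left hE hCE (hw 0 (Nat.zero_le N))
  have hright := abs_sub_le_of_incremental_right hC hCE (hw N le_rfl)
  have hinterior := sum_le_sum fun i (hi : i ∈ range N) =>
    abs_sub_le_of_incremental_interior hC hE hCE i (hw i (by simp at hi; omega))
      (hw (i + 1) (by simp at hi; omega))
  have hE_telescope : ∑ i ∈ range N, (E (i + 2) * |v (i + 3) - v (i + 2)|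
      - E (i + 1) * |v (i + 2) - v (i + 1)|)
      = E (N + 1) * |v (N + 2) - v (N + 1)| - E 1 * |v 2 - v 1| :=
    sum_range_sub (fun i => E (i + 1) * |v (i + 2) - v (i + 1)|) N
  simp only [sum_add_distrib, sum_range_sub', hE_telescope] at hinterior
  simp only [sum_range_succ _ (N + 1), sum_range_succ' _ N, add_assoc, Nat.reduceAdd] at hinterior ⊢
  linarith

end Harten

lemma slope_nonneg_of_deriv_nonneg {f : ℝ → ℝ} (hf : Differentiable ℝ f)
    (hf' : ∀ x, 0 ≤ deriv f x) (x y : ℝ) : 0 ≤ slope f x y :=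
  ((monotone_of_deriv_nonneg hf hf').monotoneOn Set.univ).slope_nonneg trivial trivial

lemma slope_nonpos_of_deriv_nonpos {f : ℝ → ℝ} (hf : Differentiable ℝ f)
    (hf' : ∀ x, deriv f x ≤ 0) (x y : ℝ) : slope f x y ≤ 0 :=
  ((antitone_of_deriv_nonpos hf hf').antitoneOn Set.univ).slope_nonpos trivial trivial

lemma slope_mul_sub (f : ℝ → ℝ) (a b : ℝ) : slope f a b * (b - a) = f b - f a := by
  simpa [mul_comm] using sub_smul_slope f a b

/-- The CFL bound on derivatives passes to difference quotients, because it makes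
`λ (F₁ - F₂) - id` antitone. -/
lemma mul_slope_sub_slope_le_one {F₁ F₂ : ℝ → ℝ} {lam : ℝ} (hF₁ : Differentiable ℝ F₁)
    (hF₂ : Differentiable ℝ F₂) (hCFL : ∀ w, lam * (deriv F₁ w - deriv F₂ w) ≤ 1) (x y : ℝ) :
    lam * (slope F₁ x y - slope F₂ x y) ≤ 1 := by
  rcases eq_or_ne x y with rfl | hxy
  · simp [slope_same]
  set g : ℝ → ℝ := fun w => lam * (F₁ w - F₂ w) - w
  have hg : ∀ w, HasDerivAt g (lam * (deriv F₁ w - deriv F₂ w) - 1) w := fun w =>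
    (((hF₁ w).hasDerivAt.sub (hF₂ w).hasDerivAt).const_mul lam).sub (hasDerivAt_id w)
  have hg_anti : Antitone g := antitone_of_deriv_nonpos (fun w => (hg w).differentiableAt)
    fun w => by rw [(hg w).deriv]; linarith [hCFL w]
  have hslope : slope g x y = lam * (slope F₁ x y - slope F₂ x y) - 1 := by
    have : y - x ≠ 0 := sub_ne_zero.2 hxy.symm
    simp only [g, slope_def_field]
    field_simp
    ring
  linarith [(hg_anti.antitoneOn Set.univ).slope_nonpos trivial trivial (x := x) (y := y)]

noncomputable def trapezoidSum (f : ℕ → ℝ) (j : ℕ) : ℝ := f 0 / 2 + ∑ i ∈ Ico 1 j, f i + f j / 2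

lemma trapezoidSum_succ_sub (f : ℕ → ℝ) {j : ℕ} (hj : 1 ≤ j) :
    trapezoidSum f (j + 1) - trapezoidSum f j = (f j + f (j + 1)) / 2 := by
  rw [trapezoidSum, trapezoidSum, sum_Ico_succ_top hj]
  ring

lemma abs_trapezoidSum_le {f : ℕ → ℝ} {K : ℝ} {j : ℕ} (hj : 1 ≤ j) (hf : ∀ i ≤ j, |f i| ≤ K) :
    |trapezoidSum f j| ≤ j * K := by
  induction j, hj using Nat.le_induction with
  | base =>
    have h : trapezoidSum f 1 = (f 0 + f 1) / 2 := by simp [trapezoidSum]; ring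
    simpa [h] using abs_add_div_two_le (hf 0 (by omega)) (hf 1 le_rfl)
  | succ j hj ih =>
    have hstep := abs_add_div_two_le (hf j (by omega)) (hf (j + 1) le_rfl)
    rw [← add_sub_cancel (trapezoidSum f j) (trapezoidSum f (j + 1)), trapezoidSum_succ_sub f hj]
    push_cast
    linarith [abs_add_le (trapezoidSum f j) ((f j + f (j + 1)) / 2),
      ih fun i hi => hf i (by omega)]

lemma abs_trapezoid_source_le {f T : ℕ → ℝ} {h c K : ℝ} {N : ℕ} (hh : 0 ≤ h)
    (hc : h * (N + 2) ≤ c) (hf : ∀ i ≤ N + 2, |f i| ≤ K) (hT : ∀ j, T j = h * trapezoidSum f j) :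
    |T 1| + |T (N + 1)| + ∑ i ∈ range N, |T (i + 2) - T (i + 1)| ≤ 3 * (c * K) := by
  have hK : 0 ≤ K := (abs_nonneg _).trans (hf 0 (by omega))
  have hT_le : ∀ j, 1 ≤ j → j ≤ N + 2 → |T j| ≤ h * (j * K) := fun j hj₁ hj₂ => by
    rw [hT, abs_mul, abs_of_nonneg hh]
    exact mul_le_mul_of_nonneg_left (abs_trapezoidSum_le hj₁ fun i hi => hf i (by omega)) hh
  have hincr : ∀ i ∈ range N, |T (i + 2) - T (i + 1)| ≤ h * K := fun i hi => by
    have := mem_range.1 hi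
    rw [hT, hT, ← mul_sub, abs_mul, abs_of_nonneg hh, trapezoidSum_succ_sub f (by omega)]
    exact mul_le_mul_of_nonneg_left
      (abs_add_div_two_le (hf (i + 1) (by omega)) (hf (i + 1 + 1) (by omega))) hh
  have h₁ := hT_le 1 le_rfl (by omega)
  have h₂ := hT_le (N + 1) (by omega) (by omega)
  have h₃ := sum_le_sum hincr
  rw [sum_const, card_range, nsmul_eq_mul] at h₃
  push_cast at h₁ h₂
  have hhK := mul_nonneg hh hK
  nlinarith [mul_le_mul_of_nonneg_right hc hK, mul_nonneg N.cast_nonneg hhK]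

/-- One-step total variation estimate: for every `n ≤ M`, the solution of the
scheme satisfies
`|u^{n+1}|_{BV} ≤ |uⁿ|_{BV} + |u₀^{n+1} - u₀ⁿ| + |u_N^{n+1} - u_Nⁿ| + 3 γ Δt ‖uⁿ‖_∞`. -/
theorem stmt_4 (N M : ℕ) (hN : 3 ≤ N) (T γ Δx Δt lam : ℝ)
    (hT : 0 < T) (hγ : 0 < γ)
    (hΔx : Δx = 1 / N) (hΔt : Δt = T / (M + 1)) (hlam : lam = Δt / Δx)
    (F₁ F₂ : ℝ → ℝ) (hF₁ : ContDiff ℝ 1 F₁) (hF₂ : ContDiff ℝ 1 F₂)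
    (hmono₁ : ∀ w, 0 ≤ deriv F₁ w) (hmono₂ : ∀ w, deriv F₂ w ≤ 0)
    (hCFL : ∀ w, lam * (deriv F₁ w - deriv F₂ w) ≤ 1)
    (u : ℕ → ℕ → ℝ) (P : ℕ → ℕ → ℝ)
    (hP : ∀ n j, P n j = Δx * (u n 0 / 2 + ∑ i ∈ Finset.Ico 1 j, u n i + u n j / 2))
    (hscheme : ∀ n, n ≤ M → ∀ j, 1 ≤ j → j ≤ N - 1 →
      u (n + 1) j = u n j
        - lam * ((F₁ (u n j) + F₂ (u n (j + 1))) - (F₁ (u n (j - 1)) + F₂ (u n j)))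
        + γ * Δt * P n j) :
    ∀ n, n ≤ M →
      ∑ j ∈ Finset.range N, |u (n + 1) (j + 1) - u (n + 1) j|
        ≤ (∑ j ∈ Finset.range N, |u n (j + 1) - u n j|)
          + |u (n + 1) 0 - u n 0| + |u (n + 1) N - u n N|
          + 3 * γ * Δt *
            (Finset.range (N + 1)).sup' Finset.nonempty_range_add_one (fun j => |u n j|) := by
  intro n hn
  obtain ⟨k, rfl⟩ : ∃ k, N = k + 2 := ⟨N - 2, by omega⟩
  have hΔx_pos : 0 < Δx := by rw [hΔx]; positivity
  have hΔt_pos : 0 < Δt := by rw [hΔt]; positivity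
  have hlam_nonneg : 0 ≤ lam := by rw [hlam]; positivity
  have hF₁' := hF₁.differentiable one_ne_zero
  have hF₂' := hF₂.differentiable one_ne_zero
  set K := (range (k + 2 + 1)).sup' nonempty_range_add_one fun j => |u n j|
  have hK : ∀ j ≤ k + 2, |u n j| ≤ K := fun j hj =>
    le_sup' (fun j => |u n j|) (mem_range.2 (by omega))
  have hsource := abs_trapezoid_source_le (T := fun j => γ * Δt * P n j) (h := γ * Δt * Δx)
    (c := γ * Δt) (by positivity) (le_of_eq (by rw [hΔx]; push_cast; field_simp)) hK
    fun j => by rw [hP, trapezoidSum]; ring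
  have htv := sum_abs_sub_le_of_incremental (N := k) (v := u n) (w := u (n + 1))
    (C := fun j => lam * slope F₁ (u n j) (u n (j + 1)))
    (E := fun j => -(lam * slope F₂ (u n j) (u n (j + 1))))
    (s := fun j => γ * Δt * P n j)
    (fun j => mul_nonneg hlam_nonneg (slope_nonneg_of_deriv_nonneg hF₁' hmono₁ _ _))
    (fun j => neg_nonneg.2 <|
      mul_nonpos_of_nonneg_of_nonpos hlam_nonneg (slope_nonpos_of_deriv_nonpos hF₂' hmono₂ _ _))
    (fun j => by linarith [mul_slope_sub_slope_le_one hF₁' hF₂' hCFL (u n j) (u n (j + 1))])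
    fun j hj => by
      rw [hscheme n hn (j + 1) (by omega) (by omega), Nat.add_sub_cancel]
      linear_combination lam * slope_mul_sub F₁ (u n j) (u n (j + 1))
        + lam * slope_mul_sub F₂ (u n (j + 1)) (u n (j + 2))
  beta_reduce at hsource htv
  linarith
end

section
/- Interior discrete entropy inequality (Lemma 5.1, first inequality): for every convex entropy η ∈ C²(ℝ), every j = 1,…,N−1 and every n = 0,…,M, the solution of the scheme satisfies (η(u_j^{n+1}) − η(u_jⁿ))/Δt + (Q(u_jⁿ, u_{j+1}ⁿ) − Q(u_{j−1}ⁿ, u_jⁿ))/Δx − γ·η′(u_j^{n+1})·P_jⁿ ≤ 0. -/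
/-!
The update `u_j^{n+1} - γΔt P_jⁿ = H(u_{j-1}ⁿ, u_jⁿ, u_{j+1}ⁿ)` of the flux-splitting scheme is
monotone in each argument under the CFL condition and satisfies `H(k,k,k) = k`, so
(Crandall–Majda) `max (H(a,b,d)) k ≤ H(a ⊔ k, b ⊔ k, d ⊔ k)`: the cell entropy inequality holds
for every Kruzhkov entropy `(· - k)⁺`. A convex `C²` entropy is, up to an affine function, the
superposition `∫ η''(k) (· - k)⁺ dk`, and integrating against `η'' ≥ 0` gives the inequality
for `η`. The source term is then absorbed by the tangent-line inequality for `η` at `u_j^{n+1}`.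
-/

open intervalIntegral Set

lemma ConvexOn.add_deriv_mul_sub_le {f : ℝ → ℝ} (hf : ConvexOn ℝ univ f) {y : ℝ}
    (hd : DifferentiableAt ℝ f y) (x : ℝ) : f y + deriv f y * (x - y) ≤ f x := by
  rcases lt_trichotomy y x with h | rfl | h
  · have := hf.deriv_le_slope (mem_univ y) (mem_univ x) h hd
    rw [slope_def_field, le_div_iff₀ (sub_pos.2 h)] at this
    linarith
  · simp
  · have := hf.slope_le_deriv (mem_univ x) (mem_univ y) h hd
    rw [slope_def_field, div_le_iff₀ (sub_pos.2 h)] at this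
    linarith

lemma ConvexOn.deriv_deriv_nonneg {f : ℝ → ℝ} (hf : ConvexOn ℝ univ f)
    (hd : Differentiable ℝ f) (x : ℝ) : 0 ≤ deriv (deriv f) x :=
  (monotoneOn_univ.1 (hf.monotoneOn_deriv fun x _ => hd x)).deriv_nonneg

section Kruzhkov

variable {f G : ℝ → ℝ} {L R a b : ℝ}

/-- Integration by parts against the Kruzhkov flux `G (a ⊔ k) - G k`, which vanishes for
`k ≥ a`; this is why any window `[L, R] ∋ a` can be used. -/
lemma integral_mul_deriv_eq_integral_kruzhkov (hf : ContDiff ℝ 1 f) (hG : ContDiff ℝ 1 G)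
    (hLa : L ≤ a) (haR : a ≤ R) :
    ∫ z in L..a, f z * deriv G z =
      f L * (G a - G L) + ∫ k in L..R, deriv f k * (G (max a k) - G k) := by
  have hf' : Continuous (deriv f) := hf.continuous_deriv le_rfl
  have hG' : Continuous (deriv G) := hG.continuous_deriv le_rfl
  have hcont : Continuous fun k => deriv f k * (G (max a k) - G k) := by
    have := hG.continuous; fun_prop
  have htail : ∫ k in a..R, deriv f k * (G (max a k) - G k) = 0 := by
    refine (integral_congr fun k hk => ?_).trans integral_zero
    rw [uIcc_of_le haR] at hk
    simp [max_eq_right hk.1]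
  have hhead : ∫ k in L..a, deriv f k * (G (max a k) - G k) =
      ∫ k in L..a, deriv f k * (G a - G k) := by
    refine integral_congr fun k hk => ?_
    rw [uIcc_of_le hLa] at hk
    simp [max_eq_left hk.2]
  have hparts := integral_mul_deriv_eq_deriv_mul (a := L) (b := a) (u := f)
    (v := fun k => G k - G a)
    (fun k _ => (hf.differentiable one_ne_zero k).hasDerivAt)
    (fun k _ => ((hG.differentiable one_ne_zero k).hasDerivAt.sub_const (G a)))
    (hf'.intervalIntegrable _ _) (hG'.intervalIntegrable _ _)
  have hneg : ∫ k in L..a, deriv f k * (G k - G a) = -∫ k in L..a, deriv f k * (G a - G k) := by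
    rw [← integral_neg]; congr 1; ext k; ring
  rw [← integral_add_adjacent_intervals (hcont.intervalIntegrable L a)
    (hcont.intervalIntegrable a R), htail, hhead, hparts, hneg]
  ring

lemma integral_mul_deriv_eq_integral_kruzhkov_sub (hf : ContDiff ℝ 1 f) (hG : ContDiff ℝ 1 G)
    (hLa : L ≤ a) (haR : a ≤ R) (hLb : L ≤ b) (hbR : b ≤ R) :
    ∫ z in a..b, f z * deriv G z =
      f L * (G b - G a) + ∫ k in L..R, deriv f k * (G (max b k) - G (max a k)) := by
  have hf' : Continuous (deriv f) := hf.continuous_deriv le_rfl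
  have hG' : Continuous (deriv G) := hG.continuous_deriv le_rfl
  have hGc := hG.continuous
  have hint : ∀ x, Continuous fun k => deriv f k * (G (max x k) - G k) := fun x => by fun_prop
  have hint' : Continuous fun z => f z * deriv G z := by have := hf.continuous; fun_prop
  rw [← integral_interval_sub_left (hint'.intervalIntegrable L b) (hint'.intervalIntegrable L a),
    integral_mul_deriv_eq_integral_kruzhkov hf hG hLb hbR,
    integral_mul_deriv_eq_integral_kruzhkov hf hG hLa haR, add_sub_add_comm, ← mul_sub,
    ← integral_sub ((hint b).intervalIntegrable L R) ((hint a).intervalIntegrable L R)]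
  congr 1
  · ring
  · congr 1; ext k; ring

end Kruzhkov

/-- Superposition of Kruzhkov entropies: `η = η(L) + η'(L)(· - L) + ∫ η''(k) (· - k)⁺ dk` on a
window `[L, R]`, so the inequality for every `(· - k)⁺` together with the conservation identity
`hcons` (which takes care of the affine part) gives it for `η`. -/
theorem entropy_le_of_kruzhkov {η F₁ F₂ : ℝ → ℝ} (hη : ContDiff ℝ 2 η)
    (hconv : ConvexOn ℝ univ η) (hF₁ : ContDiff ℝ 1 F₁) (hF₂ : ContDiff ℝ 1 F₂) {lam a b d h : ℝ}
    (hcons : h - b + lam * ((F₁ b - F₁ a) + (F₂ d - F₂ b)) = 0)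
    (hkruzhkov : ∀ k, (max h k - max b k) + lam * (F₁ (max b k) - F₁ (max a k))
      + lam * (F₂ (max d k) - F₂ (max b k)) ≤ 0) :
    η h - η b
      + lam * ((∫ z in a..b, deriv η z * deriv F₁ z) + ∫ z in b..d, deriv η z * deriv F₂ z)
      ≤ 0 := by
  have hη' : ContDiff ℝ 1 (deriv η) := hη.deriv'
  have hη'' : Continuous (deriv (deriv η)) := hη'.continuous_deriv le_rfl
  have hF₁c := hF₁.continuous
  have hF₂c := hF₂.continuous
  set L := min (min a b) (min d h)
  set R := max (max a b) (max d h)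
  obtain ⟨hLa, hLb, hLd, hLh⟩ : L ≤ a ∧ L ≤ b ∧ L ≤ d ∧ L ≤ h := by simp [L]
  obtain ⟨haR, hbR, hdR, hhR⟩ : a ≤ R ∧ b ≤ R ∧ d ≤ R ∧ h ≤ R := by simp [R]
  have hηh : η h - η b =
      deriv η L * (h - b) + ∫ k in L..R, deriv (deriv η) k * (max h k - max b k) := by
    have := integral_mul_deriv_eq_integral_kruzhkov_sub hη' contDiff_id hLb hbR hLh hhR
    simp only [deriv_id, mul_one, id_eq] at this
    rw [← this, integral_deriv_eq_sub (fun x _ => hη.differentiable (by norm_num) x)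
      (hη'.continuous.intervalIntegrable _ _)]
  have hsum : (∫ k in L..R, deriv (deriv η) k * (max h k - max b k))
      + lam * (∫ k in L..R, deriv (deriv η) k * (F₁ (max b k) - F₁ (max a k)))
      + lam * (∫ k in L..R, deriv (deriv η) k * (F₂ (max d k) - F₂ (max b k)))
      = ∫ k in L..R, deriv (deriv η) k * ((max h k - max b k)
          + lam * (F₁ (max b k) - F₁ (max a k)) + lam * (F₂ (max d k) - F₂ (max b k))) := by
    have hc₀ : Continuous fun k => deriv (deriv η) k * (max h k - max b k) := by fun_prop
    have hc₁ : Continuous fun k => deriv (deriv η) k * (F₁ (max b k) - F₁ (max a k)) := by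
      fun_prop
    have hc₂ : Continuous fun k => deriv (deriv η) k * (F₂ (max d k) - F₂ (max b k)) := by
      fun_prop
    rw [← integral_const_mul, ← integral_const_mul, ← integral_add (hc₀.intervalIntegrable _ _)
      ((hc₁.intervalIntegrable _ _).const_mul lam), ← integral_add
      ((hc₀.intervalIntegrable _ _).add ((hc₁.intervalIntegrable _ _).const_mul lam))
      ((hc₂.intervalIntegrable _ _).const_mul lam)]
    congr 1; ext k; ring
  have hint : ∫ k in L..R, deriv (deriv η) k * ((max h k - max b k)
      + lam * (F₁ (max b k) - F₁ (max a k)) + lam * (F₂ (max d k) - F₂ (max b k))) ≤ 0 := by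
    simpa using integral_mono_on (hLa.trans haR) (Continuous.intervalIntegrable (by fun_prop) _ _)
      intervalIntegrable_const fun k _ => mul_nonpos_of_nonneg_of_nonpos
        (hconv.deriv_deriv_nonneg (hη.differentiable (by norm_num)) k) (hkruzhkov k)
  rw [hηh, integral_mul_deriv_eq_integral_kruzhkov_sub hη' hF₁ hLa haR hLb hbR,
    integral_mul_deriv_eq_integral_kruzhkov_sub hη' hF₂ hLb hbR hLd hdR]
  linear_combination hsum + hint + deriv η L * hcons

/-- The update of the flux-splitting scheme without its source term, as a function of the
stencil `(u_{j-1}, u_j, u_{j+1}) = (a, b, d)`. -/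
def splitFluxStep (lam : ℝ) (F₁ F₂ : ℝ → ℝ) (a b d : ℝ) : ℝ :=
  b - lam * ((F₁ b + F₂ d) - (F₁ a + F₂ b))

section SplitFluxStep

variable {lam : ℝ} {F₁ F₂ : ℝ → ℝ}

lemma splitFluxStep_self (k : ℝ) : splitFluxStep lam F₁ F₂ k k k = k := by
  simp [splitFluxStep]

lemma splitFluxStep_mono (h₁ : Monotone F₁) (h₂ : Antitone F₂) (hlam : 0 ≤ lam)
    (hcfl : Monotone fun y => y - lam * (F₁ y - F₂ y)) {a a' b b' d d' : ℝ}
    (ha : a ≤ a') (hb : b ≤ b') (hd : d ≤ d') :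
    splitFluxStep lam F₁ F₂ a b d ≤ splitFluxStep lam F₁ F₂ a' b' d' := by
  have hb' := hcfl hb
  have ha' := mul_le_mul_of_nonneg_left (h₁ ha) hlam
  have hd' := mul_le_mul_of_nonneg_left (h₂ hd) hlam
  simp only at hb'
  unfold splitFluxStep
  linarith

lemma max_splitFluxStep_le (h₁ : Monotone F₁) (h₂ : Antitone F₂) (hlam : 0 ≤ lam)
    (hcfl : Monotone fun y => y - lam * (F₁ y - F₂ y)) (a b d k : ℝ) :
    max (splitFluxStep lam F₁ F₂ a b d) k ≤
      splitFluxStep lam F₁ F₂ (max a k) (max b k) (max d k) := by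
  refine max_le (splitFluxStep_mono h₁ h₂ hlam hcfl (le_max_left _ _) (le_max_left _ _)
    (le_max_left _ _)) ?_
  calc k = splitFluxStep lam F₁ F₂ k k k := (splitFluxStep_self k).symm
    _ ≤ _ := splitFluxStep_mono h₁ h₂ hlam hcfl (le_max_right _ _) (le_max_right _ _)
      (le_max_right _ _)

lemma monotone_sub_mul_of_deriv_le (hF₁ : Differentiable ℝ F₁) (hF₂ : Differentiable ℝ F₂)
    (hcfl : ∀ w, lam * (deriv F₁ w - deriv F₂ w) ≤ 1) :
    Monotone fun y => y - lam * (F₁ y - F₂ y) := by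
  have hderiv : ∀ y, HasDerivAt (fun y => y - lam * (F₁ y - F₂ y))
      (1 - lam * (deriv F₁ y - deriv F₂ y)) y := fun y =>
    (hasDerivAt_id y).sub (((hF₁ y).hasDerivAt.sub (hF₂ y).hasDerivAt).const_mul lam)
  refine monotone_of_deriv_nonneg (fun y => (hderiv y).differentiableAt) fun y => ?_
  rw [(hderiv y).deriv]
  linarith [hcfl y]

theorem splitFluxStep_entropy_le {η : ℝ → ℝ} (hη : ContDiff ℝ 2 η) (hconv : ConvexOn ℝ univ η)
    (hF₁ : ContDiff ℝ 1 F₁) (hF₂ : ContDiff ℝ 1 F₂) (h₁ : Monotone F₁) (h₂ : Antitone F₂)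
    (hlam : 0 ≤ lam) (hcfl : Monotone fun y => y - lam * (F₁ y - F₂ y)) (a b d : ℝ) :
    η (splitFluxStep lam F₁ F₂ a b d) - η b
      + lam * ((∫ z in a..b, deriv η z * deriv F₁ z) + ∫ z in b..d, deriv η z * deriv F₂ z)
      ≤ 0 := by
  refine entropy_le_of_kruzhkov hη hconv hF₁ hF₂ (by rw [splitFluxStep]; ring) fun k => ?_
  have := max_splitFluxStep_le h₁ h₂ hlam hcfl a b d k
  simp only [splitFluxStep] at this ⊢
  linarith

end SplitFluxStep

theorem stmt_8_general (N M : ℕ) (T γ Δx Δt lam : ℝ)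
    (hT : 0 < T)
    (hΔx : Δx = 1 / N) (hΔt : Δt = T / (M + 1)) (hlam : lam = Δt / Δx)
    (F₁ F₂ : ℝ → ℝ) (hF₁ : ContDiff ℝ 1 F₁) (hF₂ : ContDiff ℝ 1 F₂)
    (hmono₁ : ∀ w, 0 ≤ deriv F₁ w) (hmono₂ : ∀ w, deriv F₂ w ≤ 0)
    (hCFL : ∀ w, lam * (deriv F₁ w - deriv F₂ w) ≤ 1)
    (u : ℕ → ℕ → ℝ) (P : ℕ → ℕ → ℝ)
    (hscheme : ∀ n, n ≤ M → ∀ j, 1 ≤ j → j ≤ N - 1 →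
      u (n + 1) j = u n j
        - lam * ((F₁ (u n j) + F₂ (u n (j + 1))) - (F₁ (u n (j - 1)) + F₂ (u n j)))
        + γ * Δt * P n j)
    (η : ℝ → ℝ) (hη : ContDiff ℝ 2 η) (hconv : ConvexOn ℝ Set.univ η)
    (c : ℝ) (Q : ℝ → ℝ → ℝ)
    (hQ : ∀ a b, Q a b = (∫ z in c..a, deriv η z * deriv F₁ z)
        + ∫ z in c..b, deriv η z * deriv F₂ z) :
    ∀ n, n ≤ M → ∀ j, 1 ≤ j → j ≤ N - 1 →
      (η (u (n + 1) j) - η (u n j)) / Δt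
        + (Q (u n j) (u n (j + 1)) - Q (u n (j - 1)) (u n j)) / Δx
        - γ * deriv η (u (n + 1) j) * P n j ≤ 0 := by
  intro n hn j hj₁ hj₂
  have hU := hscheme n hn j hj₁ hj₂
  set a := u n (j - 1)
  set b := u n j
  set d := u n (j + 1)
  set U := u (n + 1) j
  have hΔt₀ : 0 < Δt := by rw [hΔt]; positivity
  have hlam₀ : 0 ≤ lam := by rw [hlam, hΔx]; positivity
  have hcell := splitFluxStep_entropy_le hη hconv hF₁ hF₂
    (monotone_of_deriv_nonneg (hF₁.differentiable one_ne_zero) hmono₁)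
    (antitone_of_deriv_nonpos (hF₂.differentiable one_ne_zero) hmono₂) hlam₀
    (monotone_sub_mul_of_deriv_le (hF₁.differentiable one_ne_zero)
      (hF₂.differentiable one_ne_zero) hCFL) a b d
  have htangent := hconv.add_deriv_mul_sub_le (hη.differentiable (by norm_num) U)
    (splitFluxStep lam F₁ F₂ a b d)
  have hstep : splitFluxStep lam F₁ F₂ a b d - U = -(γ * Δt * P n j) := by
    rw [splitFluxStep, hU]; ring
  have hflux : Q b d - Q a b =
      (∫ z in a..b, deriv η z * deriv F₁ z) + ∫ z in b..d, deriv η z * deriv F₂ z := by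
    have hc₁ : Continuous fun z => deriv η z * deriv F₁ z :=
      (hη.continuous_deriv (by norm_num)).mul (hF₁.continuous_deriv le_rfl)
    have hc₂ : Continuous fun z => deriv η z * deriv F₂ z :=
      (hη.continuous_deriv (by norm_num)).mul (hF₂.continuous_deriv le_rfl)
    rw [hQ, hQ, ← integral_interval_sub_left (hc₁.intervalIntegrable c b)
      (hc₁.intervalIntegrable c a), ← integral_interval_sub_left (hc₂.intervalIntegrable c d)
      (hc₂.intervalIntegrable c b)]
    ring
  rw [hstep] at htangent
  calc (η U - η b) / Δt + (Q b d - Q a b) / Δx - γ * deriv η U * P n j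
      = (η U - η b + lam * (Q b d - Q a b) - γ * Δt * deriv η U * P n j) / Δt := by
        rw [hlam]; field_simp
    _ ≤ 0 := div_nonpos_of_nonpos_of_nonneg (by rw [hflux]; linarith) hΔt₀.le

/-- Interior discrete entropy inequality (Lemma 5.1, first inequality): for every
convex entropy `η ∈ C²(ℝ)` with numerical entropy flux
`Q(u,v) = ∫_c^u η'(z) F₁'(z) dz + ∫_c^v η'(z) F₂'(z) dz`, every `j = 1,…,N-1`
and every `n = 0,…,M`, the solution of the scheme satisfies
`(η(u_j^{n+1}) - η(u_jⁿ))/Δt + (Q(u_jⁿ,u_{j+1}ⁿ) - Q(u_{j-1}ⁿ,u_jⁿ))/Δx - γ η'(u_j^{n+1}) P_jⁿ ≤ 0`. -/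
theorem stmt_8 (N M : ℕ) (hN : 2 ≤ N) (T γ Δx Δt lam : ℝ)
    (hT : 0 < T) (hγ : 0 < γ)
    (hΔx : Δx = 1 / N) (hΔt : Δt = T / (M + 1)) (hlam : lam = Δt / Δx)
    (F₁ F₂ : ℝ → ℝ) (hF₁ : ContDiff ℝ 1 F₁) (hF₂ : ContDiff ℝ 1 F₂)
    (hmono₁ : ∀ w, 0 ≤ deriv F₁ w) (hmono₂ : ∀ w, deriv F₂ w ≤ 0)
    (hCFL : ∀ w, lam * (deriv F₁ w - deriv F₂ w) ≤ 1)
    (u : ℕ → ℕ → ℝ) (P : ℕ → ℕ → ℝ)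
    (hP : ∀ n j, P n j = Δx * (u n 0 / 2 + ∑ i ∈ Finset.Ico 1 j, u n i + u n j / 2))
    (hscheme : ∀ n, n ≤ M → ∀ j, 1 ≤ j → j ≤ N - 1 →
      u (n + 1) j = u n j
        - lam * ((F₁ (u n j) + F₂ (u n (j + 1))) - (F₁ (u n (j - 1)) + F₂ (u n j)))
        + γ * Δt * P n j)
    (η : ℝ → ℝ) (hη : ContDiff ℝ 2 η) (hconv : ConvexOn ℝ Set.univ η)
    (c : ℝ) (Q : ℝ → ℝ → ℝ)
    (hQ : ∀ a b, Q a b = (∫ z in c..a, deriv η z * deriv F₁ z)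
        + ∫ z in c..b, deriv η z * deriv F₂ z) :
    ∀ n, n ≤ M → ∀ j, 1 ≤ j → j ≤ N - 1 →
      (η (u (n + 1) j) - η (u n j)) / Δt
        + (Q (u n j) (u n (j + 1)) - Q (u n (j - 1)) (u n j)) / Δx
        - γ * deriv η (u (n + 1) j) * P n j ≤ 0 :=
  stmt_8_general N M T γ Δx Δt lam hT hΔx hΔt hlam F₁ F₂ hF₁ hF₂ hmono₁ hmono₂ hCFL u P hscheme η hη
    hconv c Q hQ
end

section
/- Discrete entropy inequality at the left boundary (Lemma 5.1, second inequality): for every convex entropy η ∈ C²(ℝ) and all real numbers a, b, one has Q(a,b) − Q(a,a) − η′(a)·(F(a,b) − F(a,a)) ≤ 0. -/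
/-!
The `F₁`-parts cancel, and the remaining difference is
`∫_a^b (η'(z) - η'(a)) F₂'(z) dz`. Convexity makes `η'` monotone, so the integrand has the sign
of `-(z - a)`, which makes the oriented integral nonpositive whether `a ≤ b` or `b ≤ a`.
-/

open intervalIntegral

lemma integral_sub_mul_nonpos_of_monotone {φ h : ℝ → ℝ} (hφ : Monotone φ) (hh : ∀ z, h z ≤ 0)
    (a b : ℝ) : ∫ z in a..b, (φ z - φ a) * h z ≤ 0 := by
  rcases le_total a b with hab | hba
  · have : 0 ≤ ∫ z in a..b, -((φ z - φ a) * h z) :=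
      integral_nonneg hab fun z hz ↦ neg_nonneg.2 <|
        mul_nonpos_of_nonneg_of_nonpos (sub_nonneg.2 (hφ hz.1)) (hh z)
    rwa [integral_neg, neg_nonneg] at this
  · have : 0 ≤ ∫ z in b..a, (φ z - φ a) * h z :=
      integral_nonneg hba fun z hz ↦
        mul_nonneg_of_nonpos_of_nonpos (sub_nonpos.2 (hφ hz.2)) (hh z)
    rwa [integral_symm, neg_nonpos]

lemma integral_mul_deriv_le_of_monotone {φ G : ℝ → ℝ} (hφ : Monotone φ) (hφc : Continuous φ)
    (hG : ContDiff ℝ 1 G) (hG' : ∀ w, deriv G w ≤ 0) (a b : ℝ) :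
    ∫ z in a..b, φ z * deriv G z ≤ φ a * (G b - G a) := by
  have hG'c : Continuous (deriv G) := hG.continuous_deriv le_rfl
  have hFTC : ∫ z in a..b, deriv G z = G b - G a :=
    integral_deriv_eq_sub (fun x _ ↦ hG.differentiable one_ne_zero x) (hG'c.intervalIntegrable _ _)
  have hsplit : ∫ z in a..b, (φ z - φ a) * deriv G z
      = (∫ z in a..b, φ z * deriv G z) - φ a * ∫ z in a..b, deriv G z := by
    simp only [sub_mul]
    have hφG : Continuous fun z ↦ φ z * deriv G z := hφc.mul hG'c
    have haG : Continuous fun z ↦ φ a * deriv G z := continuous_const.mul hG'c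
    rw [integral_sub (hφG.intervalIntegrable _ _) (haG.intervalIntegrable _ _), integral_const_mul]
  have := integral_sub_mul_nonpos_of_monotone hφ hG' a b
  rw [hsplit, hFTC] at this
  linarith

theorem stmt_9_general (F₁ F₂ : ℝ → ℝ) (hF₂ : ContDiff ℝ 1 F₂)
    (hmono₂ : ∀ w, deriv F₂ w ≤ 0)
    (η : ℝ → ℝ) (hη : ContDiff ℝ 2 η) (hconv : ConvexOn ℝ Set.univ η)
    (c : ℝ) (Q : ℝ → ℝ → ℝ)
    (hQ : ∀ u v, Q u v = (∫ z in c..u, deriv η z * deriv F₁ z)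
        + ∫ z in c..v, deriv η z * deriv F₂ z)
    (a b : ℝ) :
    Q a b - Q a a - deriv η a * ((F₁ a + F₂ b) - (F₁ a + F₂ a)) ≤ 0 := by
  have hη'c : Continuous (deriv η) := hη.continuous_deriv one_le_two
  have hη'mono : Monotone (deriv η) := fun x y hxy ↦
    hconv.monotoneOn_deriv (fun x _ ↦ hη.differentiable two_ne_zero x) trivial trivial hxy
  have hflux : Q a b - Q a a = ∫ z in a..b, deriv η z * deriv F₂ z := by
    have hηF₂ : Continuous fun z ↦ deriv η z * deriv F₂ z :=
      hη'c.mul (hF₂.continuous_deriv le_rfl)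
    have hint := hηF₂.intervalIntegrable (μ := MeasureTheory.volume)
    rw [hQ, hQ, ← integral_interval_sub_left (hint c b) (hint c a)]
    ring
  rw [hflux]
  linarith [integral_mul_deriv_le_of_monotone hη'mono hη'c hF₂ hmono₂ a b]

/-- Discrete entropy inequality at the left boundary (Lemma 5.1, second
inequality): for every convex entropy `η ∈ C²(ℝ)` with numerical entropy flux
`Q(u,v) = ∫_c^u η'(z) F₁'(z) dz + ∫_c^v η'(z) F₂'(z) dz` and all `a, b ∈ ℝ`,
`Q(a,b) - Q(a,a) - η'(a) (F(a,b) - F(a,a)) ≤ 0`, where `F(u,v) = F₁(u) + F₂(v)`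
and `F₂' ≤ 0`. -/
theorem stmt_9 (F₁ F₂ : ℝ → ℝ) (hF₁ : ContDiff ℝ 1 F₁) (hF₂ : ContDiff ℝ 1 F₂)
    (hmono₂ : ∀ w, deriv F₂ w ≤ 0)
    (η : ℝ → ℝ) (hη : ContDiff ℝ 2 η) (hconv : ConvexOn ℝ Set.univ η)
    (c : ℝ) (Q : ℝ → ℝ → ℝ)
    (hQ : ∀ u v, Q u v = (∫ z in c..u, deriv η z * deriv F₁ z)
        + ∫ z in c..v, deriv η z * deriv F₂ z)
    (a b : ℝ) :
    Q a b - Q a a - deriv η a * ((F₁ a + F₂ b) - (F₁ a + F₂ a)) ≤ 0 :=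
  stmt_9_general F₁ F₂ hF₂ hmono₂ η hη hconv c Q hQ a b
end

section
/- Discrete entropy inequality at the right boundary (Lemma 5.1, third inequality): for every convex entropy η ∈ C²(ℝ) and all real numbers a, b, one has Q(a,b) − Q(b,b) − η′(b)·(F(a,b) − F(b,b)) ≥ 0. -/
/-! The left-hand side equals `∫_b^a (η'(z) - η'(b)) F₁'(z) dz`. Since `η'` is
monotone, the integrand has the sign of `z - b` on the interval between `b` and `a`, and so does
the orientation of the integral, so it is nonnegative. -/

open intervalIntegral

lemma integral_sub_apply_mul_nonneg_of_monotone {g h : ℝ → ℝ} (hg : Monotone g)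
    (hh : ∀ z, 0 ≤ h z) (a b : ℝ) : 0 ≤ ∫ z in b..a, (g z - g b) * h z := by
  rcases le_total b a with hba | hab
  · exact integral_nonneg hba fun z hz => mul_nonneg (sub_nonneg.2 (hg hz.1)) (hh z)
  · rw [integral_symm, ← integral_neg]
    exact integral_nonneg hab fun z hz =>
      neg_nonneg.2 (mul_nonpos_of_nonpos_of_nonneg (sub_nonpos.2 (hg hz.2)) (hh z))

lemma integral_mul_deriv_sub_apply_mul_sub {f g : ℝ → ℝ} (hf : ContDiff ℝ 1 f)
    (hg : Continuous g) (a b : ℝ) :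
    (∫ z in b..a, g z * deriv f z) - g b * (f a - f b)
      = ∫ z in b..a, (g z - g b) * deriv f z := by
  have hf' : Continuous (deriv f) := hf.continuous_deriv le_rfl
  have hftc : ∫ z in b..a, deriv f z = f a - f b :=
    integral_deriv_eq_sub (fun x _ => (hf.differentiable one_ne_zero).differentiableAt)
      (hf'.intervalIntegrable _ _)
  simp_rw [sub_mul]
  rw [integral_sub (f := fun z => g z * deriv f z) (g := fun z => g b * deriv f z)
    ((hg.mul hf').intervalIntegrable _ _) ((continuous_const.mul hf').intervalIntegrable _ _),
    integral_const_mul, hftc]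

lemma ConvexOn.monotone_deriv {f : ℝ → ℝ} (hfc : ConvexOn ℝ Set.univ f)
    (hfd : Differentiable ℝ f) : Monotone (deriv f) :=
  fun x y hxy => hfc.monotoneOn_deriv (fun x _ => hfd x) (Set.mem_univ x) (Set.mem_univ y) hxy

theorem stmt_10_general (F₁ F₂ : ℝ → ℝ) (hF₁ : ContDiff ℝ 1 F₁)
    (hmono₁ : ∀ w, 0 ≤ deriv F₁ w)
    (η : ℝ → ℝ) (hη : ContDiff ℝ 2 η) (hconv : ConvexOn ℝ Set.univ η)
    (c : ℝ) (Q : ℝ → ℝ → ℝ)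
    (hQ : ∀ u v, Q u v = (∫ z in c..u, deriv η z * deriv F₁ z)
        + ∫ z in c..v, deriv η z * deriv F₂ z)
    (a b : ℝ) :
    0 ≤ Q a b - Q b b - deriv η b * ((F₁ a + F₂ b) - (F₁ b + F₂ b)) := by
  have hη' : Continuous (deriv η) := hη.continuous_deriv one_le_two
  have hflux : Continuous fun z => deriv η z * deriv F₁ z :=
    hη'.mul (hF₁.continuous_deriv le_rfl)
  calc 0 ≤ ∫ z in b..a, (deriv η z - deriv η b) * deriv F₁ z :=
        integral_sub_apply_mul_nonneg_of_monotone
          (hconv.monotone_deriv (hη.differentiable two_ne_zero)) hmono₁ a b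
    _ = (∫ z in b..a, deriv η z * deriv F₁ z) - deriv η b * (F₁ a - F₁ b) :=
        (integral_mul_deriv_sub_apply_mul_sub hF₁ hη' a b).symm
    _ = Q a b - Q b b - deriv η b * ((F₁ a + F₂ b) - (F₁ b + F₂ b)) := by
        rw [hQ, hQ, ← integral_interval_sub_left (hflux.intervalIntegrable c a)
          (hflux.intervalIntegrable c b)]
        ring

/-- Discrete entropy inequality at the right boundary (Lemma 5.1, third
inequality): for every convex entropy `η ∈ C²(ℝ)` with numerical entropy flux
`Q(u,v) = ∫_c^u η'(z) F₁'(z) dz + ∫_c^v η'(z) F₂'(z) dz` and all `a, b ∈ ℝ`,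
`Q(a,b) - Q(b,b) - η'(b) (F(a,b) - F(b,b)) ≥ 0`, where `F(u,v) = F₁(u) + F₂(v)`
and `F₁' ≥ 0`. -/
theorem stmt_10 (F₁ F₂ : ℝ → ℝ) (hF₁ : ContDiff ℝ 1 F₁) (hF₂ : ContDiff ℝ 1 F₂)
    (hmono₁ : ∀ w, 0 ≤ deriv F₁ w)
    (η : ℝ → ℝ) (hη : ContDiff ℝ 2 η) (hconv : ConvexOn ℝ Set.univ η)
    (c : ℝ) (Q : ℝ → ℝ → ℝ)
    (hQ : ∀ u v, Q u v = (∫ z in c..u, deriv η z * deriv F₁ z)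
        + ∫ z in c..v, deriv η z * deriv F₂ z)
    (a b : ℝ) :
    0 ≤ Q a b - Q b b - deriv η b * ((F₁ a + F₂ b) - (F₁ b + F₂ b)) :=
  stmt_10_general F₁ F₂ hF₁ hmono₁ η hη hconv c Q hQ a b
end

section
/- Left-boundary sign lemma for Kružkov entropy fluxes (used in the uniqueness proof of Theorem 5.2): let f : ℝ → ℝ and a, b, α ∈ ℝ. If for every k ∈ ℝ one has q(a,k) − q(α,k) − sign(α − k)·(f(a) − f(α)) ≤ 0 and q(b,k) − q(α,k) − sign(α − k)·(f(b) − f(α)) ≤ 0, then q(a,b) = sign(a − b)·(f(a) − f(b)) ≤ 0. -/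
/-- Left-boundary sign lemma for Kružkov entropy fluxes (used in the uniqueness
proof of Theorem 5.2): if for every `k ∈ ℝ` both
`q(a,k) - q(α,k) - sign(α-k) (f(a) - f(α)) ≤ 0` and
`q(b,k) - q(α,k) - sign(α-k) (f(b) - f(α)) ≤ 0`, where
`q(u,k) = sign(u-k) (f(u) - f(k))` with `sign 0 = 0`, then
`q(a,b) = sign(a-b) (f(a) - f(b)) ≤ 0`. -/
theorem stmt_14 (f : ℝ → ℝ) (a b α : ℝ)
    (ha : ∀ k : ℝ, Real.sign (a - k) * (f a - f k)
        - Real.sign (α - k) * (f α - f k) - Real.sign (α - k) * (f a - f α) ≤ 0)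
    (hb : ∀ k : ℝ, Real.sign (b - k) * (f b - f k)
        - Real.sign (α - k) * (f α - f k) - Real.sign (α - k) * (f b - f α) ≤ 0) :
    Real.sign (a - b) * (f a - f b) ≤ 0 := by
  have sneg : ∀ x y : ℝ, x < y → Real.sign (x - y) = -1 :=
    fun x y h => Real.sign_of_neg (by linarith)
  have spos : ∀ x y : ℝ, y < x → Real.sign (x - y) = 1 :=
    fun x y h => Real.sign_of_pos (by linarith)
  have szer : ∀ x y : ℝ, x = y → Real.sign (x - y) = 0 :=
    fun x y h => by rw [h, sub_self, Real.sign_zero]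
  have h1 := ha b
  have h2 := hb a
  have h3 := ha α
  have h4 := hb α
  rw [sub_self, Real.sign_zero] at h3 h4
  rcases lt_trichotomy a b with h|h|h <;>
  rcases lt_trichotomy α a with h'|h'|h' <;>
  rcases lt_trichotomy α b with h''|h''|h'' <;>
  simp_all [sneg, spos, szer] <;> linarith
end

section
/- Right-boundary sign lemma for Kružkov entropy fluxes (used in the uniqueness proof of Theorem 5.2): let f : ℝ → ℝ and a, b, β ∈ ℝ. If for every k ∈ ℝ one has q(a,k) − q(β,k) − sign(β − k)·(f(a) − f(β)) ≥ 0 and q(b,k) − q(β,k) − sign(β − k)·(f(b) − f(β)) ≥ 0, then q(a,b) = sign(a − b)·(f(a) − f(b)) ≥ 0. -/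
lemma stmt_15_aux (f : ℝ → ℝ) (a b β : ℝ) (hab : b < a)
    (ha : ∀ k : ℝ, 0 ≤ Real.sign (a - k) * (f a - f k)
        - Real.sign (β - k) * (f β - f k) - Real.sign (β - k) * (f a - f β))
    (hb : ∀ k : ℝ, 0 ≤ Real.sign (b - k) * (f b - f k)
        - Real.sign (β - k) * (f β - f k) - Real.sign (β - k) * (f b - f β)) :
    f b ≤ f a := by
  rcases lt_trichotomy β b with h1 | h1 | h1
  · have h := ha b
    rw [Real.sign_of_pos (show (0:ℝ) < a - b by linarith),
      Real.sign_of_neg (show β - b < 0 by linarith)] at h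
    linarith
  · have h := ha b
    rw [Real.sign_of_pos (show (0:ℝ) < a - b by linarith),
      show β - b = 0 by linarith, Real.sign_zero] at h
    linarith
  · rcases lt_trichotomy β a with h2 | h2 | h2
    · have h := ha β
      rw [Real.sign_of_pos (show (0:ℝ) < a - β by linarith),
        sub_self, Real.sign_zero] at h
      have h' := hb β
      rw [Real.sign_of_neg (show b - β < 0 by linarith),
        sub_self, Real.sign_zero] at h'
      linarith
    · have h := hb a
      rw [Real.sign_of_neg (show b - a < 0 by linarith),
        show β - a = 0 by linarith, Real.sign_zero] at h
      linarith
    · have h := hb a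
      rw [Real.sign_of_neg (show b - a < 0 by linarith),
        Real.sign_of_pos (show (0:ℝ) < β - a by linarith)] at h
      linarith

/-- Right-boundary sign lemma for Kružkov entropy fluxes (used in the uniqueness
proof of Theorem 5.2): if for every `k ∈ ℝ` both
`q(a,k) - q(β,k) - sign(β-k) (f(a) - f(β)) ≥ 0` and
`q(b,k) - q(β,k) - sign(β-k) (f(b) - f(β)) ≥ 0`, where
`q(u,k) = sign(u-k) (f(u) - f(k))` with `sign 0 = 0`, then
`q(a,b) = sign(a-b) (f(a) - f(b)) ≥ 0`. -/
theorem stmt_15 (f : ℝ → ℝ) (a b β : ℝ)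
    (ha : ∀ k : ℝ, 0 ≤ Real.sign (a - k) * (f a - f k)
        - Real.sign (β - k) * (f β - f k) - Real.sign (β - k) * (f a - f β))
    (hb : ∀ k : ℝ, 0 ≤ Real.sign (b - k) * (f b - f k)
        - Real.sign (β - k) * (f β - f k) - Real.sign (β - k) * (f b - f β)) :
    0 ≤ Real.sign (a - b) * (f a - f b) := by
  rcases lt_trichotomy a b with h | h | h
  · have := stmt_15_aux f b a β h hb ha
    rw [Real.sign_of_neg (show a - b < 0 by linarith)]
    linarith
  · rw [show a - b = 0 by linarith, Real.sign_zero]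
    simp
  · have := stmt_15_aux f a b β h ha hb
    rw [Real.sign_of_pos (show (0:ℝ) < a - b by linarith)]
    linarith
end

section
/- Identification of the weak boundary flux (step in the proof of Theorem 4.2): let f : ℝ → ℝ and a, α, w ∈ ℝ. If for every k ∈ ℝ one has sign(a − k)·(f(a) − f(k)) ≤ sign(α − k)·(f(α) − f(k)) + sign(α − k)·(w − f(α)), then w = f(a). -/
/-- Identification of the weak boundary flux (step in the proof of Theorem 4.2):
if for every `k ∈ ℝ` one has
`sign(a-k) (f(a) - f(k)) ≤ sign(α-k) (f(α) - f(k)) + sign(α-k) (w - f(α))`,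
with the convention `sign 0 = 0`, then `w = f(a)`. -/
theorem stmt_16 (f : ℝ → ℝ) (a α w : ℝ)
    (h : ∀ k : ℝ, Real.sign (a - k) * (f a - f k)
        ≤ Real.sign (α - k) * (f α - f k) + Real.sign (α - k) * (w - f α)) :
    w = f a := by
  have h1 := h (min a α - 1)
  have h2 := h (max a α + 1)
  rw [Real.sign_of_pos (by linarith [min_le_left a α] : (0:ℝ) < a - (min a α - 1)),
      Real.sign_of_pos (by linarith [min_le_right a α] : (0:ℝ) < α - (min a α - 1))] at h1
  rw [Real.sign_of_neg (by linarith [le_max_left a α] : a - (max a α + 1) < 0),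
      Real.sign_of_neg (by linarith [le_max_right a α] : α - (max a α + 1) < 0)] at h2
  linarith
end
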